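/- (Theorem 2, near-optimality of the finite-horizon value.) Under Condition 1 and Assumption SA1, let α ∈ (0,1) satisfy αP̄ ⪯ Q_i for all i ∈ 𝕄 and α₀ > 0 satisfy α₀(P̄ − P̲) ⪯ Q_i for all i ∈ 𝕄. Then for every integer d > 1 and every x ∈ ℝⁿ, V*(x) − V*_d(x) ≤ (1/α₀)·(1−α)^{d−1}·xᵀP̄x, where V*(x) is real-valued (finite) by SA1. -/

import Mathlib

open Matrix Filter
open scoped ENNReal

/-- Data of a switched linear-quadratic problem with `M` modes,
state dimension `n` and continuous-input dimension `m`. -/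
structure SwitchedLQR (n m M : ℕ) where
  A : Fin M → Matrix (Fin n) (Fin n) ℝ
  B : Fin M → Matrix (Fin n) (Fin m) ℝ
  Q : Fin M → Matrix (Fin n) (Fin n) ℝ
  R : Fin M → Matrix (Fin m) (Fin m) ℝ

namespace SwitchedLQR

variable {n m M : ℕ}

/-- Stage cost `ℓ(x,u,i) = xᵀQᵢx + uᵀRᵢu`. -/
def ell (S : SwitchedLQR n m M) (x : Fin n → ℝ) (u : Fin m → ℝ) (i : Fin M) : ℝ :=
  x ⬝ᵥ ((S.Q i) *ᵥ x) + u ⬝ᵥ ((S.R i) *ᵥ u)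

/-- Riccati operator `𝓡ᵢ(P)`. -/
noncomputable def Ric (S : SwitchedLQR n m M) (i : Fin M)
    (P : Matrix (Fin n) (Fin n) ℝ) : Matrix (Fin n) (Fin n) ℝ :=
  S.Q i + (S.A i)ᵀ * P * S.A i -
    (S.A i)ᵀ * P * S.B i * (S.R i + (S.B i)ᵀ * P * S.B i)⁻¹ * ((S.B i)ᵀ * P * S.A i)

/-- `P_𝐢 = 𝓡_{i₀}(𝓡_{i₁}(⋯𝓡_{i_{d-1}}(P̲)⋯))` for a finite mode sequence `𝐢`. -/
noncomputable def Pseq (S : SwitchedLQR n m M) (Pund : Matrix (Fin n) (Fin n) ℝ)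
    (l : List (Fin M)) : Matrix (Fin n) (Fin n) ℝ :=
  l.foldr S.Ric Pund

/-- Solution `φ(k,x,u,i)` of the switched linear system. -/
def phi (S : SwitchedLQR n m M) (x : Fin n → ℝ) (u : ℕ → Fin m → ℝ) (is : ℕ → Fin M) :
    ℕ → Fin n → ℝ
  | 0 => x
  | k + 1 => S.A (is k) *ᵥ (phi S x u is k) + S.B (is k) *ᵥ (u k)

/-- Finite-horizon cost `J_d` with terminal cost matrix `P̲`. -/
noncomputable def Jd (S : SwitchedLQR n m M) (Pund : Matrix (Fin n) (Fin n) ℝ) (d : ℕ)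
    (x : Fin n → ℝ) (u : ℕ → Fin m → ℝ) (is : ℕ → Fin M) : ℝ :=
  (∑ k ∈ Finset.range d, S.ell (S.phi x u is k) (u k) (is k)) +
    (S.phi x u is d) ⬝ᵥ (Pund *ᵥ (S.phi x u is d))

/-- Infinite-horizon cost `J(x,u,i) ∈ [0,∞]`. -/
noncomputable def Jinf (S : SwitchedLQR n m M) (x : Fin n → ℝ) (u : ℕ → Fin m → ℝ)
    (is : ℕ → Fin M) : ℝ≥0∞ :=
  ∑' k : ℕ, ENNReal.ofReal (S.ell (S.phi x u is k) (u k) (is k))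

/-- Optimal value function `V*(x)`. -/
noncomputable def Vstar (S : SwitchedLQR n m M) (x : Fin n → ℝ) : ℝ≥0∞ :=
  ⨅ (u : ℕ → Fin m → ℝ) (is : ℕ → Fin M), S.Jinf x u is

/-- `V*_d(x)`: minimum over length-`d` mode sequences `𝐢` of `xᵀP_𝐢x`. -/
noncomputable def Vd (S : SwitchedLQR n m M) (Pund : Matrix (Fin n) (Fin n) ℝ) (d : ℕ)
    (x : Fin n → ℝ) : ℝ :=
  sInf {r : ℝ | ∃ l : List (Fin M), l.length = d ∧ r = x ⬝ᵥ ((S.Pseq Pund l) *ᵥ x)}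

/-- Condition 1: the LMI block matrix is positive semi-definite for every mode. -/
def Cond1 (S : SwitchedLQR n m M) (Pund : Matrix (Fin n) (Fin n) ℝ) : Prop :=
  ∀ i : Fin M,
    (Matrix.fromBlocks
      ((S.A i)ᵀ * Pund * S.A i - Pund + S.Q i) ((S.A i)ᵀ * Pund * S.B i)
      ((S.B i)ᵀ * Pund * S.A i) (S.R i + (S.B i)ᵀ * Pund * S.B i)).PosSemidef

/-- Assumption SA1. -/
def SA1 (S : SwitchedLQR n m M) (Pbar : Matrix (Fin n) (Fin n) ℝ) : Prop :=
  Pbar.PosDef ∧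
    ∀ x : Fin n → ℝ, ∃ (u : ℕ → Fin m → ℝ) (is : ℕ → Fin M),
      S.Jinf x u is = S.Vstar x ∧ S.Vstar x ≤ ENNReal.ofReal (x ⬝ᵥ (Pbar *ᵥ x))

/-- `H*_d(x)`. -/
noncomputable def HStar (S : SwitchedLQR n m M) (Pund : Matrix (Fin n) (Fin n) ℝ) (d : ℕ)
    (x : Fin n → ℝ) : Set ((Fin m → ℝ) × Fin M) :=
  {p | S.Vd Pund d x =
        S.ell x p.1 p.2 + S.Vd Pund (d - 1) (S.A p.2 *ᵥ x + S.B p.2 *ᵥ p.1)}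

/-- `F_d(x)`. -/
noncomputable def Fd (S : SwitchedLQR n m M) (Pund : Matrix (Fin n) (Fin n) ℝ) (d : ℕ)
    (x : Fin n → ℝ) : Set (Fin n → ℝ) :=
  {y | ∃ p ∈ S.HStar Pund d x, y = S.A p.2 *ᵥ x + S.B p.2 *ᵥ p.1}

end SwitchedLQR

/-!
Completing the square gives `xᵀ𝓡ᵢ(P)x = ℓ(x,u,i) + yᵀPy` with `y = Aᵢx + Bᵢu` for the LQ-optimal
input `u`. Take `P = P_𝐭` and `𝐢 = i :: 𝐭`. Bellman's inequality `V*(x) ≤ ℓ(x,u,i) + V*(y)` bounds the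
gap `V*(x) - xᵀP_𝐢x` by the gap `V*(y) - yᵀP_𝐭y`, and, when the gap at `x` is nonnegative,
`ℓ(x,u,i) ≥ αxᵀP̄x ≥ αV*(x) ≥ αxᵀP_𝐢x` gives `yᵀP_𝐭y ≤ (1 - α)xᵀP_𝐢x`. So every further Riccati step
contributes a factor `1 - α`. For a single step, Condition 1 gives `xᵀP̲x ≤ xᵀ𝓡ᵢ(P̲)x`, hence
`α₀(V*(x) - xᵀ𝓡ᵢ(P̲)x) ≤ α₀xᵀ(P̄ - P̲)x ≤ xᵀQᵢx ≤ xᵀ𝓡ᵢ(P̲)x`.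
-/

namespace Matrix

variable {ι κ : Type*} [Fintype ι] [Fintype κ]

lemma PosSemidef.dotProduct_mulVec_self_nonneg {P : Matrix ι ι ℝ} (hP : P.PosSemidef)
    (x : ι → ℝ) : 0 ≤ x ⬝ᵥ (P *ᵥ x) := by
  simpa using hP.dotProduct_mulVec_nonneg x

lemma PosSemidef.smul_dotProduct_mulVec_le {P₁ P₂ : Matrix ι ι ℝ} {c : ℝ}
    (h : (P₁ - c • P₂).PosSemidef) (x : ι → ℝ) :
    c * (x ⬝ᵥ (P₂ *ᵥ x)) ≤ x ⬝ᵥ (P₁ *ᵥ x) := by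
  have h0 := h.dotProduct_mulVec_self_nonneg x
  rw [sub_mulVec, dotProduct_sub, smul_mulVec, dotProduct_smul, smul_eq_mul] at h0
  linarith

lemma mulVec_dotProduct_mulVec_mulVec {μ : Type*} [Fintype μ]
    (L : Matrix μ ι ℝ) (P : Matrix μ μ ℝ) (N : Matrix μ κ ℝ) (v : ι → ℝ) (w : κ → ℝ) :
    (L *ᵥ v) ⬝ᵥ (P *ᵥ (N *ᵥ w)) = v ⬝ᵥ ((Lᵀ * P * N) *ᵥ w) := by
  rw [← mulVec_mulVec, ← mulVec_mulVec, dotProduct_mulVec v, vecMul_transpose]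

variable [DecidableEq κ]

lemma closedLoop_cost_eq_riccati (A Q P : Matrix ι ι ℝ) (B : Matrix ι κ ℝ) (R : Matrix κ κ ℝ)
    (hP : Pᵀ = P) (hR : Rᵀ = R) (hG : IsUnit (R + Bᵀ * P * B).det) :
    let K := (R + Bᵀ * P * B)⁻¹ * (Bᵀ * P * A)
    Q + Kᵀ * R * K + (A - B * K)ᵀ * P * (A - B * K)
      = Q + Aᵀ * P * A - Aᵀ * P * B * (R + Bᵀ * P * B)⁻¹ * (Bᵀ * P * A) := by
  intro K
  set G := R + Bᵀ * P * B with hGdef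
  have hGs : Gᵀ = G := by
    simp only [hGdef, transpose_add, transpose_mul, transpose_transpose, hP, hR, Matrix.mul_assoc]
  have hGK : G * K = Bᵀ * P * A := by
    rw [← Matrix.mul_assoc, mul_nonsing_inv _ hG, Matrix.one_mul]
  have hKG : Kᵀ * G = Aᵀ * P * B := by
    rw [← hGs, ← transpose_mul, hGK]
    simp only [transpose_mul, transpose_transpose, hP, Matrix.mul_assoc]
  have hKBPA : Kᵀ * (Bᵀ * P * A) = Aᵀ * P * B * K := by
    rw [← hGK, ← Matrix.mul_assoc, hKG]
  calc Q + Kᵀ * R * K + (A - B * K)ᵀ * P * (A - B * K)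
      = Q + Aᵀ * P * A - Aᵀ * P * B * K - Kᵀ * (Bᵀ * P * A) + Kᵀ * G * K := by
        simp only [hGdef, transpose_sub, transpose_mul, Matrix.sub_mul, Matrix.mul_sub,
          Matrix.mul_add, Matrix.add_mul, Matrix.mul_assoc]
        abel
    _ = Q + Aᵀ * P * A - Aᵀ * P * B * G⁻¹ * (Bᵀ * P * A) := by
        rw [hKBPA, hKG, sub_add_cancel, Matrix.mul_assoc _ G⁻¹]

lemma exists_dotProduct_eq_riccati (A Q P : Matrix ι ι ℝ) (B : Matrix ι κ ℝ)
    (R : Matrix κ κ ℝ) (hP : Pᵀ = P) (hR : Rᵀ = R) (hG : IsUnit (R + Bᵀ * P * B).det)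
    (x : ι → ℝ) :
    ∃ u : κ → ℝ,
      x ⬝ᵥ (Q *ᵥ x) + u ⬝ᵥ (R *ᵥ u) + (A *ᵥ x + B *ᵥ u) ⬝ᵥ (P *ᵥ (A *ᵥ x + B *ᵥ u))
        = x ⬝ᵥ ((Q + Aᵀ * P * A - Aᵀ * P * B * (R + Bᵀ * P * B)⁻¹ * (Bᵀ * P * A)) *ᵥ x) := by
  set K := (R + Bᵀ * P * B)⁻¹ * (Bᵀ * P * A)
  refine ⟨-(K *ᵥ x), ?_⟩
  have hy : A *ᵥ x + B *ᵥ -(K *ᵥ x) = (A - B * K) *ᵥ x := by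
    rw [mulVec_neg, mulVec_mulVec, sub_mulVec, sub_eq_add_neg]
  rw [hy, ← neg_mulVec, mulVec_dotProduct_mulVec_mulVec, mulVec_dotProduct_mulVec_mulVec,
    ← dotProduct_add, ← dotProduct_add, ← add_mulVec, ← add_mulVec]
  simp only [transpose_neg, Matrix.neg_mul, Matrix.mul_neg, neg_neg]
  exact congrArg (x ⬝ᵥ · *ᵥ x) (closedLoop_cost_eq_riccati A Q P B R hP hR hG)

end Matrix

namespace SwitchedLQR

variable {n m M : ℕ} (S : SwitchedLQR n m M)

lemma ell_nonneg {i : Fin M} (hQ : (S.Q i).PosSemidef) (hR : (S.R i).PosSemidef)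
    (x : Fin n → ℝ) (u : Fin m → ℝ) : 0 ≤ S.ell x u i :=
  add_nonneg (hQ.dotProduct_mulVec_self_nonneg x) (hR.dotProduct_mulVec_self_nonneg u)

lemma isUnit_det_R_add {i : Fin M} (hR : (S.R i).PosDef) {P : Matrix (Fin n) (Fin n) ℝ}
    (hP : P.PosSemidef) : IsUnit (S.R i + (S.B i)ᵀ * P * S.B i).det :=
  (hR.add_posSemidef (hP.conjTranspose_mul_mul_same (S.B i))).det_pos.ne'.isUnit

lemma exists_ell_add_eq_Ric {i : Fin M} (hR : (S.R i).PosDef) {P : Matrix (Fin n) (Fin n) ℝ}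
    (hP : P.PosSemidef) (x : Fin n → ℝ) :
    ∃ u : Fin m → ℝ,
      S.ell x u i + (S.A i *ᵥ x + S.B i *ᵥ u) ⬝ᵥ (P *ᵥ (S.A i *ᵥ x + S.B i *ᵥ u))
        = x ⬝ᵥ (S.Ric i P *ᵥ x) :=
  exists_dotProduct_eq_riccati _ _ _ _ _ hP.isHermitian hR.isHermitian
    (S.isUnit_det_R_add hR hP) x

lemma dotProduct_Q_le_Ric {i : Fin M} (hR : (S.R i).PosDef) {P : Matrix (Fin n) (Fin n) ℝ}
    (hP : P.PosSemidef) (x : Fin n → ℝ) :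
    x ⬝ᵥ (S.Q i *ᵥ x) ≤ x ⬝ᵥ (S.Ric i P *ᵥ x) := by
  obtain ⟨u, hu⟩ := S.exists_ell_add_eq_Ric hR hP x
  have hRu := hR.posSemidef.dotProduct_mulVec_self_nonneg u
  have hPy := hP.dotProduct_mulVec_self_nonneg (S.A i *ᵥ x + S.B i *ᵥ u)
  rw [ell] at hu
  linarith

lemma Ric_posSemidef {i : Fin M} (hQ : (S.Q i).PosDef) (hR : (S.R i).PosDef)
    {P : Matrix (Fin n) (Fin n) ℝ} (hP : P.PosSemidef) : (S.Ric i P).PosSemidef := by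
  refine .of_dotProduct_mulVec_nonneg ?_ fun x => ?_
  · have hPs : Pᵀ = P := hP.isHermitian
    have hQs : (S.Q i)ᵀ = S.Q i := hQ.isHermitian
    have hRs : (S.R i)ᵀ = S.R i := hR.isHermitian
    simp [IsHermitian, Ric, transpose_nonsing_inv, hPs, hQs, hRs, Matrix.mul_assoc]
  · rw [star_trivial]
    exact (hQ.posSemidef.dotProduct_mulVec_self_nonneg x).trans (S.dotProduct_Q_le_Ric hR hP x)

lemma Pseq_posSemidef (hQ : ∀ i, (S.Q i).PosDef) (hR : ∀ i, (S.R i).PosDef)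
    {Pund : Matrix (Fin n) (Fin n) ℝ} (hPund : Pund.PosSemidef) (l : List (Fin M)) :
    (S.Pseq Pund l).PosSemidef := by
  induction l with
  | nil => exact hPund
  | cons i t ih => exact S.Ric_posSemidef (hQ i) (hR i) ih

variable {S} in
lemma Cond1.dotProduct_le_ell_add {Pund : Matrix (Fin n) (Fin n) ℝ} (hC : S.Cond1 Pund)
    (i : Fin M) (x : Fin n → ℝ) (u : Fin m → ℝ) :
    x ⬝ᵥ (Pund *ᵥ x) ≤
      S.ell x u i + (S.A i *ᵥ x + S.B i *ᵥ u) ⬝ᵥ (Pund *ᵥ (S.A i *ᵥ x + S.B i *ᵥ u)) := by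
  have h := (hC i).dotProduct_mulVec_nonneg (Sum.elim x u)
  rw [star_trivial, fromBlocks_mulVec, sumElim_dotProduct_sumElim] at h
  simp only [add_mulVec, sub_mulVec, dotProduct_add, dotProduct_sub, Sum.elim_comp_inl,
    Sum.elim_comp_inr] at h
  rw [ell, mulVec_add, dotProduct_add, add_dotProduct, add_dotProduct,
    mulVec_dotProduct_mulVec_mulVec, mulVec_dotProduct_mulVec_mulVec,
    mulVec_dotProduct_mulVec_mulVec, mulVec_dotProduct_mulVec_mulVec]
  linarith

lemma Jinf_cons (x : Fin n → ℝ) (u₀ : Fin m → ℝ) (i₀ : Fin M) (u : ℕ → Fin m → ℝ)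
    (is : ℕ → Fin M) :
    S.Jinf x (Stream'.cons u₀ u) (Stream'.cons i₀ is)
      = ENNReal.ofReal (S.ell x u₀ i₀) + S.Jinf (S.A i₀ *ᵥ x + S.B i₀ *ᵥ u₀) u is := by
  have hphi : ∀ k, S.phi x (Stream'.cons u₀ u) (Stream'.cons i₀ is) (k + 1)
      = S.phi (S.A i₀ *ᵥ x + S.B i₀ *ᵥ u₀) u is k := by
    intro k
    induction k with
    | zero => rfl
    | succ k ih => exact congrArg (fun y => S.A (is k) *ᵥ y + S.B (is k) *ᵥ u k) ih
  unfold Jinf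
  rw [tsum_eq_zero_add' ENNReal.summable]
  simp only [hphi]
  rfl

lemma Vstar_le_ell_add (x : Fin n → ℝ) (u₀ : Fin m → ℝ) (i₀ : Fin M) :
    S.Vstar x ≤ ENNReal.ofReal (S.ell x u₀ i₀) + S.Vstar (S.A i₀ *ᵥ x + S.B i₀ *ᵥ u₀) := by
  calc S.Vstar x
      ≤ ⨅ (u : ℕ → Fin m → ℝ) (is : ℕ → Fin M),
          ENNReal.ofReal (S.ell x u₀ i₀) + S.Jinf (S.A i₀ *ᵥ x + S.B i₀ *ᵥ u₀) u is :=
        le_iInf₂ fun u is => (iInf₂_le _ _).trans_eq (S.Jinf_cons x u₀ i₀ u is)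
    _ = _ := by simp only [Vstar, ENNReal.add_iInf]

variable {S} in
lemma SA1.nonempty_mode {Pbar : Matrix (Fin n) (Fin n) ℝ} (hSA : S.SA1 Pbar) :
    Nonempty (Fin M) :=
  let ⟨_, is, _⟩ := hSA.2 0
  ⟨is 0⟩

variable {S} in
lemma SA1.Vstar_ne_top {Pbar : Matrix (Fin n) (Fin n) ℝ} (hSA : S.SA1 Pbar) (x : Fin n → ℝ) :
    S.Vstar x ≠ ⊤ :=
  ne_top_of_le_ne_top ENNReal.ofReal_ne_top (hSA.2 x).choose_spec.choose_spec.2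

variable {S} in
lemma SA1.toReal_Vstar_le {Pbar : Matrix (Fin n) (Fin n) ℝ} (hSA : S.SA1 Pbar)
    (x : Fin n → ℝ) : (S.Vstar x).toReal ≤ x ⬝ᵥ (Pbar *ᵥ x) :=
  ENNReal.toReal_le_of_le_ofReal (hSA.1.posSemidef.dotProduct_mulVec_self_nonneg x)
    (hSA.2 x).choose_spec.choose_spec.2

lemma toReal_Vstar_le_ell_add {Pbar : Matrix (Fin n) (Fin n) ℝ} (hSA : S.SA1 Pbar) {i₀ : Fin M}
    (hQ : (S.Q i₀).PosSemidef) (hR : (S.R i₀).PosSemidef) (x : Fin n → ℝ) (u₀ : Fin m → ℝ) :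
    (S.Vstar x).toReal ≤ S.ell x u₀ i₀ + (S.Vstar (S.A i₀ *ᵥ x + S.B i₀ *ᵥ u₀)).toReal := by
  have h := ENNReal.toReal_mono
    (ENNReal.add_ne_top.2 ⟨ENNReal.ofReal_ne_top, hSA.Vstar_ne_top _⟩)
    (S.Vstar_le_ell_add x u₀ i₀)
  rwa [ENNReal.toReal_add ENNReal.ofReal_ne_top (hSA.Vstar_ne_top _),
    ENNReal.toReal_ofReal (S.ell_nonneg hQ hR x u₀)] at h

lemma exists_length_eq_Vd_eq [Nonempty (Fin M)] (Pund : Matrix (Fin n) (Fin n) ℝ) (d : ℕ)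
    (x : Fin n → ℝ) :
    ∃ l : List (Fin M), l.length = d ∧ S.Vd Pund d x = x ⬝ᵥ (S.Pseq Pund l *ᵥ x) := by
  have hfin : {r : ℝ | ∃ l : List (Fin M), l.length = d ∧
      r = x ⬝ᵥ (S.Pseq Pund l *ᵥ x)}.Finite := by
    refine ((List.finite_length_eq (Fin M) d).image fun l => x ⬝ᵥ (S.Pseq Pund l *ᵥ x)).subset ?_
    rintro _ ⟨l, hl, rfl⟩
    exact ⟨l, hl, rfl⟩
  obtain ⟨l, hl, hVd⟩ := Set.Nonempty.csInf_mem
    (by exact ⟨_, List.replicate d (Classical.arbitrary _), List.length_replicate, rfl⟩) hfin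
  exact ⟨l, hl, hVd⟩

lemma smul_toReal_Vstar_sub_Ric_le (hR : ∀ i, (S.R i).PosDef)
    {Pund : Matrix (Fin n) (Fin n) ℝ} (hPund : Pund.PosSemidef) (hC : S.Cond1 Pund)
    {Pbar : Matrix (Fin n) (Fin n) ℝ} (hSA : S.SA1 Pbar) {α₀ : ℝ} (hα₀ : 0 ≤ α₀)
    (hα₀Q : ∀ i, (S.Q i - α₀ • (Pbar - Pund)).PosSemidef) (i : Fin M) (x : Fin n → ℝ) :
    α₀ * ((S.Vstar x).toReal - x ⬝ᵥ (S.Ric i Pund *ᵥ x)) ≤ x ⬝ᵥ (S.Ric i Pund *ᵥ x) := by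
  obtain ⟨u, hu⟩ := S.exists_ell_add_eq_Ric (hR i) hPund x
  have hPund_le : x ⬝ᵥ (Pund *ᵥ x) ≤ x ⬝ᵥ (S.Ric i Pund *ᵥ x) :=
    (hC.dotProduct_le_ell_add i x u).trans_eq hu
  have hQ_ge := (hα₀Q i).smul_dotProduct_mulVec_le x
  rw [sub_mulVec, dotProduct_sub] at hQ_ge
  have hV := hSA.toReal_Vstar_le x
  have hQ_le := S.dotProduct_Q_le_Ric (hR i) hPund x
  calc α₀ * ((S.Vstar x).toReal - x ⬝ᵥ (S.Ric i Pund *ᵥ x))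
      ≤ α₀ * (x ⬝ᵥ (Pbar *ᵥ x) - x ⬝ᵥ (Pund *ᵥ x)) := by gcongr
    _ ≤ x ⬝ᵥ (S.Ric i Pund *ᵥ x) := by linarith

lemma toReal_Vstar_sub_Pseq_le (hQ : ∀ i, (S.Q i).PosDef) (hR : ∀ i, (S.R i).PosDef)
    {Pund : Matrix (Fin n) (Fin n) ℝ} (hPund : Pund.PosSemidef) (hC : S.Cond1 Pund)
    {Pbar : Matrix (Fin n) (Fin n) ℝ} (hSA : S.SA1 Pbar) {α : ℝ} (hα0 : 0 ≤ α) (hα1 : α ≤ 1)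
    (hαQ : ∀ i, (S.Q i - α • Pbar).PosSemidef) {α₀ : ℝ} (hα₀ : 0 < α₀)
    (hα₀Q : ∀ i, (S.Q i - α₀ • (Pbar - Pund)).PosSemidef) (i : Fin M) (t : List (Fin M))
    (x : Fin n → ℝ) (hle : x ⬝ᵥ (S.Pseq Pund (i :: t) *ᵥ x) ≤ (S.Vstar x).toReal) :
    (S.Vstar x).toReal - x ⬝ᵥ (S.Pseq Pund (i :: t) *ᵥ x) ≤
      1 / α₀ * (1 - α) ^ t.length * (x ⬝ᵥ (S.Pseq Pund (i :: t) *ᵥ x)) := by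
  induction t generalizing i x with
  | nil =>
    have h := S.smul_toReal_Vstar_sub_Ric_le hR hPund hC hSA hα₀.le hα₀Q i x
    rw [List.length_nil, pow_zero, mul_one, one_div_mul_eq_div, le_div_iff₀' hα₀]
    exact h
  | cons j t ih =>
    set r := x ⬝ᵥ (S.Pseq Pund (i :: j :: t) *ᵥ x)
    obtain ⟨u, hu⟩ := S.exists_ell_add_eq_Ric (hR i) (S.Pseq_posSemidef hQ hR hPund (j :: t)) x
    set y := S.A i *ᵥ x + S.B i *ᵥ u
    change S.ell x u i + y ⬝ᵥ (S.Pseq Pund (j :: t) *ᵥ y) = r at hu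
    have hBellman := S.toReal_Vstar_le_ell_add hSA (hQ i).posSemidef (hR i).posSemidef x u
    have hell : α * (x ⬝ᵥ (Pbar *ᵥ x)) ≤ S.ell x u i :=
      ((hαQ i).smul_dotProduct_mulVec_le x).trans
        (le_add_of_nonneg_right ((hR i).posSemidef.dotProduct_mulVec_self_nonneg u))
    have hr : r ≤ x ⬝ᵥ (Pbar *ᵥ x) := hle.trans (hSA.toReal_Vstar_le x)
    have hIH := ih j y (by linarith)
    have hcontract : y ⬝ᵥ (S.Pseq Pund (j :: t) *ᵥ y) ≤ (1 - α) * r := by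
      have := mul_le_mul_of_nonneg_left hr hα0
      linarith
    calc (S.Vstar x).toReal - r
        ≤ (S.Vstar y).toReal - y ⬝ᵥ (S.Pseq Pund (j :: t) *ᵥ y) := by linarith
      _ ≤ 1 / α₀ * (1 - α) ^ t.length * (y ⬝ᵥ (S.Pseq Pund (j :: t) *ᵥ y)) := hIH
      _ ≤ 1 / α₀ * (1 - α) ^ t.length * ((1 - α) * r) := by gcongr
      _ = 1 / α₀ * (1 - α) ^ (j :: t).length * r := by
          rw [List.length_cons, pow_succ]
          ring

end SwitchedLQR

theorem stmt16_general {n m M : ℕ}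
    (S : SwitchedLQR n m M)
    (hQ : ∀ i : Fin M, (S.Q i).PosDef) (hR : ∀ i : Fin M, (S.R i).PosDef)
    (Pund : Matrix (Fin n) (Fin n) ℝ) (hPund : Pund.PosSemidef)
    (hC : S.Cond1 Pund)
    (Pbar : Matrix (Fin n) (Fin n) ℝ) (hSA : S.SA1 Pbar)
    (α : ℝ) (hα0 : 0 < α) (hα1 : α < 1)
    (hαQ : ∀ i : Fin M, (S.Q i - α • Pbar).PosSemidef)
    (α₀ : ℝ) (hα₀ : 0 < α₀)
    (hα₀Q : ∀ i : Fin M, (S.Q i - α₀ • (Pbar - Pund)).PosSemidef) :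
    ∀ (d : ℕ), 1 < d → ∀ x : Fin n → ℝ,
      S.Vstar x ≠ ⊤ ∧
      (S.Vstar x).toReal - S.Vd Pund d x ≤
        1 / α₀ * (1 - α) ^ (d - 1) * (x ⬝ᵥ (Pbar *ᵥ x)) := by
  intro d hd x
  refine ⟨hSA.Vstar_ne_top x, ?_⟩
  have := hSA.nonempty_mode
  obtain ⟨l, hl, hVd⟩ := S.exists_length_eq_Vd_eq Pund d x
  obtain ⟨i, t, rfl⟩ :=
    List.exists_cons_of_ne_nil (List.ne_nil_of_length_pos (by omega : 0 < l.length))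
  rw [hVd, ← hl, List.length_cons, Nat.add_sub_cancel]
  have hcoef : 0 ≤ 1 / α₀ * (1 - α) ^ t.length := by
    have : 0 ≤ 1 - α := by linarith
    positivity
  rcases le_or_gt (x ⬝ᵥ (S.Pseq Pund (i :: t) *ᵥ x)) (S.Vstar x).toReal with hle | hgt
  · calc (S.Vstar x).toReal - x ⬝ᵥ (S.Pseq Pund (i :: t) *ᵥ x)
        ≤ 1 / α₀ * (1 - α) ^ t.length * (x ⬝ᵥ (S.Pseq Pund (i :: t) *ᵥ x)) :=
          S.toReal_Vstar_sub_Pseq_le hQ hR hPund hC hSA hα0.le hα1.le hαQ hα₀ hα₀Q i t x hle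
      _ ≤ 1 / α₀ * (1 - α) ^ t.length * (x ⬝ᵥ (Pbar *ᵥ x)) := by
          gcongr
          exact hle.trans (hSA.toReal_Vstar_le x)
  · linarith [mul_nonneg hcoef (hSA.1.posSemidef.dotProduct_mulVec_self_nonneg x)]

/-- Theorem 2, near-optimality of the finite-horizon value: under
Condition 1 and SA1, with `α,α₀` as in eq. (8), for every integer `d > 1` and
every `x`, `V*(x)` is finite and `V*(x) - V*_d(x) ≤ (1/α₀)·(1-α)^{d-1}·xᵀP̄x`. -/
theorem stmt16 {n m M : ℕ} (hn : 0 < n) (hm : 0 < m) (hM : 0 < M)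
    (S : SwitchedLQR n m M)
    (hQ : ∀ i : Fin M, (S.Q i).PosDef) (hR : ∀ i : Fin M, (S.R i).PosDef)
    (Pund : Matrix (Fin n) (Fin n) ℝ) (hPund : Pund.PosSemidef)
    (hC : S.Cond1 Pund)
    (Pbar : Matrix (Fin n) (Fin n) ℝ) (hSA : S.SA1 Pbar)
    (α : ℝ) (hα0 : 0 < α) (hα1 : α < 1)
    (hαQ : ∀ i : Fin M, (S.Q i - α • Pbar).PosSemidef)
    (α₀ : ℝ) (hα₀ : 0 < α₀)
    (hα₀Q : ∀ i : Fin M, (S.Q i - α₀ • (Pbar - Pund)).PosSemidef) :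
    ∀ (d : ℕ), 1 < d → ∀ x : Fin n → ℝ,
      S.Vstar x ≠ ⊤ ∧
      (S.Vstar x).toReal - S.Vd Pund d x ≤
        1 / α₀ * (1 - α) ^ (d - 1) * (x ⬝ᵥ (Pbar *ᵥ x)) :=
  stmt16_general S hQ hR Pund hPund hC Pbar hSA α hα0 hα1 hαQ α₀ hα₀ hα₀Q
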